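/- Let W be the weight matrix and θ the threshold vector of a Hopfield network on n neurons, and let s be any state. For every cyclic update sequence useq : ℕ → Fin n, there exists N ≤ n · 2^n such that the state seqStates(s, useq, N) obtained after N asynchronous updates along useq is stable. -/

import Mathlib

open Finset

noncomputable section

/-- The net input to neuron `u` in state `s`: `∑_{v ≠ u} W u v * s v`. -/
def netInput {n : ℕ} (W : Matrix (Fin n) (Fin n) ℝ) (s : Fin n → ℝ) (u : Fin n) : ℝ :=
  ∑ v ∈ univ.filter (fun v => v ≠ u), W u v * s v

/-- Asynchronous update of the state `s` at neuron `u`. -/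
def Up {n : ℕ} (W : Matrix (Fin n) (Fin n) ℝ) (θ : Fin n → ℝ) (s : Fin n → ℝ)
    (u : Fin n) : Fin n → ℝ :=
  Function.update s u (if θ u ≤ netInput W s u then 1 else -1)

/-- The energy of a state of a Hopfield network. -/
def energy {n : ℕ} (W : Matrix (Fin n) (Fin n) ℝ) (θ : Fin n → ℝ) (s : Fin n → ℝ) : ℝ :=
  -(1 / 2) * (∑ u, ∑ v ∈ univ.filter (fun v => v ≠ u), W u v * s u * s v)
    + ∑ u, θ u * s u

/-- The trajectory of states obtained by asynchronously updating along the sequence `useq`. -/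
def seqStates {n : ℕ} (W : Matrix (Fin n) (Fin n) ℝ) (θ : Fin n → ℝ)
    (s : Fin n → ℝ) (useq : ℕ → Fin n) : ℕ → (Fin n → ℝ)
  | 0 => s
  | k + 1 => Up W θ (seqStates W θ s useq k) (useq k)

/-- A state is stable if updating any neuron leaves the state unchanged. -/
def isStable {n : ℕ} (W : Matrix (Fin n) (Fin n) ℝ) (θ : Fin n → ℝ)
    (s : Fin n → ℝ) : Prop :=
  ∀ u, Up W θ s u = s

/-- A sequence of neurons is cyclic if it attains every neuron and is periodic with
period `n`. -/
def cyclic {n : ℕ} (useq : ℕ → Fin n) : Prop :=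
  (∀ u, ∃ i, useq i = u) ∧ (∀ i, useq (i + n) = useq i)

/-! Order states by energy, ties broken by the number of `+1` neurons. For a symmetric weight
matrix every update that changes the state strictly decreases this key. Sampling the trajectory
after each sweep, at times `k * n` for `k ≤ 2 ^ n`, two of the `2 ^ n + 1` samples coincide, so the
key is constant on the sweep between them; hence no update in that sweep changes the state, and
since a sweep visits every neuron the sampled state is stable. -/

lemma energy_update {n : ℕ} {W : Matrix (Fin n) (Fin n) ℝ} (hW : W.IsSymm)
    (θ : Fin n → ℝ) (s : Fin n → ℝ) (u : Fin n) (b : ℝ) :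
    energy W θ (Function.update s u b)
      = energy W θ (Function.update s u 0) + b * (θ u - netInput W s u) := by
  set y := Function.update s u 0
  have hy : ∀ p, Function.update s u b p = y p + if p = u then b else 0 := by
    intro p
    by_cases hp : p = u <;> simp [y, hp]
  have hys : ∀ v, v ≠ u → y v = s v := fun v hv => Function.update_of_ne hv 0 s
  -- only row `u` and column `u` change, and by symmetry the column is row `u` again
  have hquad : ∀ p, ∀ v ∈ univ.filter (fun v => v ≠ p),
      W p v * Function.update s u b p * Function.update s u b v
        = W p v * y p * y v + (if p = u then b * (W u v * s v) else 0)
          + (if v = u then b * (W u p * s p) else 0) := by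
    intro p v hv
    rw [mem_filter] at hv
    rw [hy, hy]
    by_cases hp : p = u
    · subst hp
      simp only [↓reduceIte, hys v hv.2, hv.2, add_zero]
      ring
    · by_cases hvu : v = u
      · subst hvu
        simp only [hys p hp, hp, ↓reduceIte, add_zero, hW.apply]
        ring
      · simp [hp, hvu]
  have hlin : ∑ p, θ p * Function.update s u b p = ∑ p, θ p * y p + b * θ u := by
    simp_rw [hy, mul_add, sum_add_distrib, mul_ite, mul_zero, sum_ite_eq']
    simp [mul_comm]
  have hrow : ∑ p, (∑ v ∈ univ.filter (fun v => v ≠ p), if p = u then b * (W u v * s v) else 0)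
      = b * netInput W s u := by
    simp only [sum_ite_irrel, sum_const_zero, sum_ite_eq', mem_univ, if_true, netInput, mul_sum]
  have hcol : ∑ p, (∑ v ∈ univ.filter (fun v => v ≠ p), if v = u then b * (W u p * s p) else 0)
      = b * netInput W s u := by
    simp only [sum_ite_eq', mem_filter, mem_univ, true_and, netInput, mul_sum, sum_filter,
      ne_comm, mul_ite, mul_zero]
  simp only [energy, sum_congr rfl (hquad _), sum_add_distrib, hlin, hrow, hcol]
  ring

lemma Up_apply_eq_neg_one_or_eq_one {n : ℕ} (W : Matrix (Fin n) (Fin n) ℝ) (θ : Fin n → ℝ)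
    {s : Fin n → ℝ} (hs : ∀ v, s v = -1 ∨ s v = 1) (u v : Fin n) :
    Up W θ s u v = -1 ∨ Up W θ s u v = 1 := by
  rcases eq_or_ne v u with rfl | hv
  · unfold Up
    split_ifs <;> simp
  · rw [Up, Function.update_of_ne hv]
    exact hs v

lemma seqStates_apply_eq_neg_one_or_eq_one {n : ℕ} (W : Matrix (Fin n) (Fin n) ℝ)
    (θ : Fin n → ℝ) {s : Fin n → ℝ} (hs : ∀ v, s v = -1 ∨ s v = 1) (useq : ℕ → Fin n) :
    ∀ k v, seqStates W θ s useq k v = -1 ∨ seqStates W θ s useq k v = 1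
  | 0 => hs
  | k + 1 => Up_apply_eq_neg_one_or_eq_one W θ (seqStates_apply_eq_neg_one_or_eq_one W θ hs useq k) _

/-- A flip from `-1` to `1` at net input exactly `θ u` leaves the energy unchanged; the second
component still decreases. -/
def energyKey {n : ℕ} (W : Matrix (Fin n) (Fin n) ℝ) (θ : Fin n → ℝ) (s : Fin n → ℝ) :
    ℝ ×ₗ ℝ :=
  toLex (energy W θ s, -∑ v, s v)

lemma energyKey_Up_lt {n : ℕ} {W : Matrix (Fin n) (Fin n) ℝ} (hW : W.IsSymm) (θ : Fin n → ℝ)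
    {s : Fin n → ℝ} (hs : ∀ v, s v = -1 ∨ s v = 1) {u : Fin n} (h : Up W θ s u ≠ s) :
    energyKey W θ (Up W θ s u) < energyKey W θ s := by
  have henergy : ∀ b, energy W θ (Function.update s u b)
      = energy W θ s + (b - s u) * (θ u - netInput W s u) := by
    intro b
    have h₀ := energy_update hW θ s u (s u)
    rw [Function.update_eq_self] at h₀
    rw [energy_update hW, h₀]
    ring
  have hsum : ∀ b, ∑ v, Function.update s u b v = ∑ v, s v + (b - s u) := by
    intro b
    have h₀ := sum_update_of_mem (mem_univ u) s (s u)
    rw [Function.update_eq_self] at h₀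
    rw [sum_update_of_mem (mem_univ u), h₀]
    ring
  rw [Up] at h ⊢
  simp only [energyKey, Prod.Lex.toLex_lt_toLex, henergy, hsum]
  replace h := Function.update_ne_self_iff.1 h
  split_ifs at h ⊢ with hθ <;> rcases hs u with hu | hu
  · rw [hu]
    rcases hθ.lt_or_eq with hlt | heq
    · exact Or.inl (by linarith)
    · exact Or.inr ⟨by rw [heq]; ring, by linarith⟩
  · exact absurd hu.symm h
  · exact absurd hu.symm h
  · rw [hu]
    exact Or.inl (by linarith)

section Trajectory

variable {n : ℕ} {W : Matrix (Fin n) (Fin n) ℝ} {θ : Fin n → ℝ} {s : Fin n → ℝ}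
  {useq : ℕ → Fin n}

lemma seqStates_succ_eq_of_energyKey_eq (hW : W.IsSymm) (hs : ∀ v, s v = -1 ∨ s v = 1) {k : ℕ}
    (h : energyKey W θ (seqStates W θ s useq (k + 1)) = energyKey W θ (seqStates W θ s useq k)) :
    seqStates W θ s useq (k + 1) = seqStates W θ s useq k := by
  by_contra hne
  exact (energyKey_Up_lt hW θ (seqStates_apply_eq_neg_one_or_eq_one W θ hs useq k) hne).ne h

lemma antitone_energyKey_seqStates (hW : W.IsSymm) (hs : ∀ v, s v = -1 ∨ s v = 1) :
    Antitone fun k => energyKey W θ (seqStates W θ s useq k) := by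
  refine antitone_nat_of_succ_le fun k => ?_
  by_cases h : seqStates W θ s useq (k + 1) = seqStates W θ s useq k
  · exact (congrArg (energyKey W θ) h).le
  · exact (energyKey_Up_lt hW θ (seqStates_apply_eq_neg_one_or_eq_one W θ hs useq k) h).le

lemma isStable_seqStates_of_forall_lt {a L : ℕ}
    (hconst : ∀ r < L, seqStates W θ s useq (a + r + 1) = seqStates W θ s useq (a + r))
    (hcover : ∀ u, ∃ r < L, useq (a + r) = u) :
    isStable W θ (seqStates W θ s useq a) := by
  have hfix : ∀ r ≤ L, seqStates W θ s useq (a + r) = seqStates W θ s useq a := by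
    intro r hr
    induction r with
    | zero => rfl
    | succ r ih => rw [← add_assoc, hconst r hr, ih (by omega)]
  intro u
  obtain ⟨r, hr, rfl⟩ := hcover u
  calc Up W θ (seqStates W θ s useq a) (useq (a + r))
      = seqStates W θ s useq (a + r + 1) := by rw [← hfix r hr.le]; rfl
    _ = seqStates W θ s useq a := by rw [add_assoc, hfix (r + 1) hr]

lemma cyclic.exists_lt_apply_mul_add_eq (hcyc : cyclic useq) (k : ℕ) (u : Fin n) :
    ∃ r < n, useq (k * n + r) = u := by
  obtain ⟨i, rfl⟩ := hcyc.1 u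
  have hper : Function.Periodic useq n := hcyc.2
  refine ⟨i % n, Nat.mod_lt i (useq i).pos, ?_⟩
  rw [← hper.map_mod_nat, Nat.mul_add_mod_self_right, Nat.mod_mod, hper.map_mod_nat]

lemma isStable_seqStates_of_eq (hW : W.IsSymm) (hs : ∀ v, s v = -1 ∨ s v = 1)
    (hcyc : cyclic useq) {i j : ℕ} (hij : i < j)
    (heq : seqStates W θ s useq (i * n) = seqStates W θ s useq (j * n)) :
    isStable W θ (seqStates W θ s useq (i * n)) := by
  set key := fun k => energyKey W θ (seqStates W θ s useq k)
  have hanti : Antitone key := antitone_energyKey_seqStates hW hs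
  have hflat : ∀ m, i * n ≤ m → m ≤ j * n → key m = key (i * n) := fun m him hmj =>
    le_antisymm (hanti him) (by simpa only [key, heq] using hanti hmj)
  have hwindow : (i + 1) * n ≤ j * n := Nat.mul_le_mul_right n hij
  refine isStable_seqStates_of_forall_lt (fun r hr => ?_) (hcyc.exists_lt_apply_mul_add_eq i)
  refine seqStates_succ_eq_of_energyKey_eq hW hs ?_
  have hle : i * n + r + 1 ≤ j * n := by rw [add_one_mul] at hwindow; omega
  exact (hflat _ (by omega) hle).trans (hflat _ (by omega) (by omega)).symm

end Trajectory

theorem hopfieldNet_convergence_cyclic_general {n : ℕ}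
    (W : Matrix (Fin n) (Fin n) ℝ) (hsymm : W.IsSymm)
    (θ : Fin n → ℝ) (s : Fin n → ℝ) (hs : ∀ u, s u = -1 ∨ s u = 1) :
    ∀ useq : ℕ → Fin n, cyclic useq →
      ∃ N, N ≤ n * 2 ^ n ∧ isStable W θ (seqStates W θ s useq N) := by
  intro useq hcyc
  let states := Fintype.piFinset fun _ : Fin n => ({-1, 1} : Finset ℝ)
  have hcard : states.card < (range (2 ^ n + 1)).card := by
    simp [states, Fintype.card_piFinset, card_pair (by norm_num : (-1 : ℝ) ≠ 1)]
  have hmaps : ∀ k ∈ range (2 ^ n + 1), seqStates W θ s useq (k * n) ∈ states := fun k _ =>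
    Fintype.mem_piFinset.2 fun v => by
      simpa using seqStates_apply_eq_neg_one_or_eq_one W θ hs useq (k * n) v
  obtain ⟨i, hi, j, hj, hne, heq⟩ := exists_ne_map_eq_of_card_lt_of_maps_to hcard hmaps
  have hbound : ∀ k ∈ range (2 ^ n + 1), k * n ≤ n * 2 ^ n := fun k hk => by
    rw [mul_comm]; exact Nat.mul_le_mul_left n (Nat.lt_succ_iff.1 (mem_range.1 hk))
  rcases hne.lt_or_gt with hij | hji
  · exact ⟨i * n, hbound i hi, isStable_seqStates_of_eq hsymm hs hcyc hij heq⟩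
  · exact ⟨j * n, hbound j hj, isStable_seqStates_of_eq hsymm hs hcyc hji heq.symm⟩

/-- Convergence of a Hopfield network within `n * 2 ^ n` steps under any cyclic
asynchronous update sequence. -/
theorem hopfieldNet_convergence_cyclic {n : ℕ} (hn : 2 ≤ n)
    (W : Matrix (Fin n) (Fin n) ℝ) (hsymm : W.IsSymm) (hdiag : ∀ u, W u u = 0)
    (θ : Fin n → ℝ) (s : Fin n → ℝ) (hs : ∀ u, s u = -1 ∨ s u = 1) :
    ∀ useq : ℕ → Fin n, cyclic useq →
      ∃ N, N ≤ n * 2 ^ n ∧ isStable W θ (seqStates W θ s useq N) :=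
  hopfieldNet_convergence_cyclic_general W hsymm θ s hs
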